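/- For any probability vectors a, b on the leaves of a weighted rooted tree, the tree-Wasserstein distance satisfies the dual-type bound: ‖diag(w) B (a − b)‖₁ = max over vectors s ∈ {−1, 0, 1}^N of sᵀ diag(w) B (a − b), and consequently W_T(μ,ν) equals the supremum of Σᵢ f(xᵢ)(aᵢ − bᵢ) over functions f on the leaves that are 1-Lipschitz with respect to the tree metric d_T and vanish at a fixed basepoint. -/

import Mathlib

/-!
The first maximum is attained at `s = sign (diag(w) B (a - b))` and bounded using `|s k| ≤ 1`.
For the second, the tree metric is the weighted `ℓ¹` distance
`d_T(x, y) = ∑ₖ w k |B k x - B k y|` between columns of `B`, so `x ↦ ∑ₖ c k B k x` is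
1-Lipschitz whenever `|c k| ≤ w k`, and pairing it with `a - b` gives `cᵀ B (a - b)`; the choice
`c = s w` attains the bound. Conversely, a 1-Lipschitz `f` on the leaves extends (McShane) to
all nodes, and telescoping it along the path to the root puts it in that form, with `c k` the
increment of `f` across the edge above `k`. Additive constants are harmless since
`∑ᵢ (a i - b i) = 0`.
-/

/-- A finite rooted tree on `Fin N`, given by a parent function, with a nonnegative
weight on the edge connecting each node to its parent. -/
structure WTree (N : ℕ) where
  parent : Fin N → Fin N
  root : Fin N
  w : Fin N → ℝ
  hw : ∀ k, 0 ≤ w k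
  parent_root : parent root = root
  depth : Fin N → ℕ
  depth_root : depth root = 0
  depth_parent : ∀ v, v ≠ root → depth v = depth (parent v) + 1
  root_unique : ∀ v, depth v = 0 → v = root

/-- `T.anc i k` : node `k` is an ancestor of node `i` (including `i` itself). -/
def WTree.anc {N : ℕ} (T : WTree N) (i k : Fin N) : Prop :=
  ∃ m : ℕ, T.parent^[m] i = k

/-- A leaf is a node with no children. -/
def WTree.IsLeaf {N : ℕ} (T : WTree N) (i : Fin N) : Prop :=
  ∀ v, T.parent v = i → v = i

open Classical in
/-- The 0/1 ancestor-indicator vector `bᵢ` of node `i`. -/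
noncomputable def WTree.bvec {N : ℕ} (T : WTree N) (i : Fin N) : Fin N → ℝ :=
  fun k => if T.anc i k then 1 else 0

open Classical in
/-- The (unique-path) shortest-path distance on the weighted tree: the sum of the
weights of the edges on the path between `i` and `j`, i.e. the sum of weights over
the symmetric difference of the ancestor sets. -/
noncomputable def WTree.dist {N : ℕ} (T : WTree N) (i j : Fin N) : ℝ :=
  ∑ k, if (T.anc i k ∧ ¬ T.anc j k) ∨ (T.anc j k ∧ ¬ T.anc i k) then T.w k else 0

open Finset

lemma isGreatest_sum_sign_mul {ι : Type*} [Fintype ι] (c : ι → ℝ) :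
    IsGreatest {v : ℝ | ∃ s : ι → ℝ, (∀ k, s k = -1 ∨ s k = 0 ∨ s k = 1) ∧
      v = ∑ k, s k * c k} (∑ k, |c k|) := by
  refine ⟨⟨fun k => SignType.sign (c k), fun k => ?_, by simp⟩, ?_⟩
  · rcases h : SignType.sign (c k) <;> simp [h]
  · rintro v ⟨s, hs, rfl⟩
    refine sum_le_sum fun k _ => (le_abs_self _).trans ?_
    rw [abs_mul]
    refine mul_le_of_le_one_left (abs_nonneg _) ?_
    rcases hs k with h | h | h <;> simp [h]

lemma sum_mul_le_sum_mul_abs {ι : Type*} [Fintype ι] {c w : ι → ℝ}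
    (hc : ∀ k, |c k| ≤ w k) (x : ι → ℝ) : ∑ k, c k * x k ≤ ∑ k, w k * |x k| :=
  sum_le_sum fun k _ => calc
    c k * x k ≤ |c k| * |x k| := by rw [← abs_mul]; exact le_abs_self _
    _ ≤ w k * |x k| := mul_le_mul_of_nonneg_right (hc k) (abs_nonneg _)

lemma sum_add_const_mul_of_sum_eq_zero {ι : Type*} [Fintype ι] {d : ι → ℝ}
    (hd : ∑ i, d i = 0) (f : ι → ℝ) (C : ℝ) :
    ∑ i, (f i + C) * d i = ∑ i, f i * d i := by
  simp only [add_mul, sum_add_distrib, ← mul_sum, hd, mul_zero, add_zero]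

lemma exists_lipschitz_extension {ι α : Type*} [Fintype ι] [Nonempty ι]
    {d : α → α → ℝ} (hself : ∀ x, d x x = 0) (hcomm : ∀ x y, d x y = d y x)
    (htri : ∀ x y z, d x z ≤ d x y + d y z) (ℓ : ι → α) (f : ι → ℝ)
    (hf : ∀ i j, |f i - f j| ≤ d (ℓ i) (ℓ j)) :
    ∃ g : α → ℝ, (∀ i, g (ℓ i) = f i) ∧ ∀ x y, |g x - g y| ≤ d x y := by
  let g : α → ℝ := fun x => univ.inf' univ_nonempty fun i => f i + d (ℓ i) x
  have hg_sub : ∀ x y, g x - g y ≤ d x y := by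
    intro x y
    obtain ⟨i, -, hi⟩ := exists_mem_eq_inf' univ_nonempty fun i => f i + d (ℓ i) y
    have hx : g x ≤ f i + d (ℓ i) x := inf'_le _ (mem_univ i)
    have := htri (ℓ i) y x
    rw [hcomm y x] at this
    change g y = _ at hi
    linarith
  refine ⟨g, fun j => le_antisymm ?_ ?_, fun x y => abs_sub_le_iff.2 ⟨hg_sub x y, ?_⟩⟩
  · simpa [hself] using inf'_le (fun i => f i + d (ℓ i) (ℓ j)) (mem_univ j)
  · refine le_inf' _ _ fun i _ => ?_
    have := (abs_sub_le_iff.1 (hf i j)).2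
    linarith
  · rw [hcomm]; exact hg_sub y x

namespace WTree

variable {N : ℕ} (T : WTree N)

lemma anc_iff (v k : Fin N) : T.anc v k ↔ k = v ∨ T.anc (T.parent v) k := by
  constructor
  · rintro ⟨_ | m, hm⟩
    · exact Or.inl hm.symm
    · exact Or.inr ⟨m, by rwa [Function.iterate_succ_apply] at hm⟩
  · rintro (rfl | ⟨m, hm⟩)
    · exact ⟨0, rfl⟩
    · exact ⟨m + 1, by rwa [Function.iterate_succ_apply]⟩

lemma depth_le_of_anc {v k : Fin N} (h : T.anc v k) : T.depth k ≤ T.depth v := by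
  obtain ⟨m, rfl⟩ := h
  induction m with
  | zero => rfl
  | succ m ih =>
    rw [Function.iterate_succ_apply']
    refine le_trans ?_ ih
    by_cases hr : T.parent^[m] v = T.root
    · rw [hr, T.parent_root]
    · rw [T.depth_parent _ hr]; omega

lemma not_anc_parent {v : Fin N} (hv : v ≠ T.root) : ¬ T.anc (T.parent v) v := fun h => by
  have := T.depth_le_of_anc h
  have := T.depth_parent v hv
  omega

lemma anc_root_iff (k : Fin N) : T.anc T.root k ↔ k = T.root := by
  constructor
  · rintro ⟨m, rfl⟩
    induction m with
    | zero => rfl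
    | succ m ih => rw [Function.iterate_succ_apply', ih, T.parent_root]
  · rintro rfl
    exact ⟨0, rfl⟩

lemma bvec_root : T.bvec T.root = Pi.single T.root 1 := by
  ext k
  simp [bvec, Pi.single_apply, T.anc_root_iff]

open Classical in
lemma bvec_eq_single_add {v : Fin N} (hv : v ≠ T.root) :
    T.bvec v = Pi.single v 1 + T.bvec (T.parent v) := by
  ext k
  by_cases hk : k = v
  · subst hk
    simp [bvec, T.not_anc_parent hv, show T.anc k k from ⟨0, rfl⟩]
  · simp [bvec, hk, T.anc_iff v k]

lemma sub_root_eq_sum_mul_bvec (g : Fin N → ℝ) (v : Fin N) :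
    g v - g T.root = ∑ k, (g k - g (T.parent k)) * T.bvec v k := by
  induction hn : T.depth v generalizing v with
  | zero =>
    rw [T.root_unique v hn, bvec_root]
    simp [Pi.single_apply, T.parent_root]
  | succ n ih =>
    have hv : v ≠ T.root := fun h => by simp [h, T.depth_root] at hn
    rw [T.bvec_eq_single_add hv]
    have hdepth : T.depth (T.parent v) = n := by have := T.depth_parent v hv; omega
    simp only [Pi.add_apply, mul_add, sum_add_distrib, Pi.single_apply, mul_ite, mul_one,
      mul_zero, sum_ite_eq', mem_univ, if_true, ← ih (T.parent v) hdepth]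
    ring

lemma dist_eq_sum_mul_abs_sub_bvec (x y : Fin N) :
    T.dist x y = ∑ k, T.w k * |T.bvec x k - T.bvec y k| := by
  refine sum_congr rfl fun k _ => ?_
  by_cases hx : T.anc x k <;> by_cases hy : T.anc y k <;> simp [bvec, hx, hy]

lemma dist_self (x : Fin N) : T.dist x x = 0 := by
  simp [dist_eq_sum_mul_abs_sub_bvec]

lemma dist_comm (x y : Fin N) : T.dist x y = T.dist y x := by
  simp only [dist_eq_sum_mul_abs_sub_bvec, abs_sub_comm]

lemma dist_triangle (x y z : Fin N) : T.dist x z ≤ T.dist x y + T.dist y z := by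
  simp only [dist_eq_sum_mul_abs_sub_bvec, ← sum_add_distrib, ← mul_add]
  exact sum_le_sum fun k _ => mul_le_mul_of_nonneg_left (abs_sub_le _ _ _) (T.hw k)

lemma dist_parent {v : Fin N} (hv : v ≠ T.root) : T.dist v (T.parent v) = T.w v := by
  simp [dist_eq_sum_mul_abs_sub_bvec, T.bvec_eq_single_add hv, Pi.single_apply, apply_ite]

lemma abs_sub_parent_le {g : Fin N → ℝ} (hg : ∀ x y, |g x - g y| ≤ T.dist x y) (k : Fin N) :
    |g k - g (T.parent k)| ≤ T.w k := by
  by_cases hk : k = T.root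
  · simpa [hk, T.parent_root] using T.hw T.root
  · simpa [T.dist_parent hk] using hg k (T.parent k)

lemma abs_sum_mul_bvec_sub_le {c : Fin N → ℝ} (hc : ∀ k, |c k| ≤ T.w k) (x y : Fin N) :
    |∑ k, c k * T.bvec x k - ∑ k, c k * T.bvec y k| ≤ T.dist x y := by
  rw [← sum_sub_distrib, dist_eq_sum_mul_abs_sub_bvec]
  refine (abs_sum_le_sum_abs _ _).trans (sum_le_sum fun k _ => ?_)
  rw [← mul_sub, abs_mul]
  exact mul_le_mul_of_nonneg_right (hc k) (abs_nonneg _)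

end WTree

theorem stmt13_general {N L : ℕ} (T : WTree N) (ℓ : Fin L → Fin N)
    (i₀ : Fin L) (a b : Fin L → ℝ)
    (ha1 : ∑ i, a i = 1)
    (hb1 : ∑ i, b i = 1) :
    ∀ Bab : Fin N → ℝ, (Bab = fun k => ∑ i, T.bvec (ℓ i) k * (a i - b i)) →
      IsGreatest
        {v : ℝ | ∃ s : Fin N → ℝ, (∀ k, s k = -1 ∨ s k = 0 ∨ s k = 1) ∧
          v = ∑ k, s k * (T.w k * Bab k)}
        (∑ k, |T.w k * Bab k|) ∧
      IsGreatest
        {v : ℝ | ∃ f : Fin L → ℝ, f i₀ = 0 ∧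
          (∀ i j, |f i - f j| ≤ T.dist (ℓ i) (ℓ j)) ∧
          v = ∑ i, f i * (a i - b i)}
        (∑ k, |T.w k * Bab k|) := by
  intro Bab hBab
  have hd : ∑ i, (a i - b i) = 0 := by rw [sum_sub_distrib, ha1, hb1, sub_self]
  have pairing (c : Fin N → ℝ) :
      ∑ i, (∑ k, c k * T.bvec (ℓ i) k) * (a i - b i) = ∑ k, c k * Bab k :=
    hBab ▸ (Matrix.dotProduct_mulVec c (Matrix.of fun k i => T.bvec (ℓ i) k) (a - b)).symm
  refine ⟨isGreatest_sum_sign_mul _, ⟨?_, ?_⟩⟩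
  · let c : Fin N → ℝ := fun k => SignType.sign (T.w k * Bab k) * T.w k
    have hc (k : Fin N) : |c k| ≤ T.w k := by
      rcases h : SignType.sign (T.w k * Bab k) <;> simp [c, h, abs_of_nonneg (T.hw k), T.hw k]
    refine ⟨fun i => ∑ k, c k * T.bvec (ℓ i) k + -∑ k, c k * T.bvec (ℓ i₀) k,
      add_neg_cancel _, fun i j => ?_, ?_⟩
    · simpa only [add_sub_add_right_eq_sub] using T.abs_sum_mul_bvec_sub_le hc (ℓ i) (ℓ j)
    · beta_reduce
      rw [sum_add_const_mul_of_sum_eq_zero hd, pairing]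
      simp [c, mul_assoc]
  · rintro v ⟨f, -, hf, rfl⟩
    have : Nonempty (Fin L) := ⟨i₀⟩
    obtain ⟨g, hgf, hg⟩ :=
      exists_lipschitz_extension T.dist_self T.dist_comm T.dist_triangle ℓ f hf
    have hf_eq (i : Fin L) :
        f i = ∑ k, (g k - g (T.parent k)) * T.bvec (ℓ i) k + g T.root := by
      rw [← hgf, ← T.sub_root_eq_sum_mul_bvec, sub_add_cancel]
    calc ∑ i, f i * (a i - b i) = ∑ k, (g k - g (T.parent k)) * Bab k := by
          simp only [hf_eq, sum_add_const_mul_of_sum_eq_zero hd, pairing]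
      _ ≤ ∑ k, T.w k * |Bab k| := sum_mul_le_sum_mul_abs (T.abs_sub_parent_le hg) Bab
      _ = ∑ k, |T.w k * Bab k| := by simp only [abs_mul, abs_of_nonneg (T.hw _)]

/-- Duality for the tree-Wasserstein distance: ‖diag(w) B (a−b)‖₁ is the maximum of
sᵀ diag(w) B (a−b) over sign vectors s ∈ {−1,0,1}^N, and it equals the maximum of
Σᵢ f(xᵢ)(aᵢ − bᵢ) over functions f on the leaves that are 1-Lipschitz for the tree
metric and vanish at a fixed basepoint. -/
theorem stmt13 {N L : ℕ} (T : WTree N) (ℓ : Fin L → Fin N)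
    (hinj : Function.Injective ℓ) (hleaf : ∀ i, T.IsLeaf (ℓ i))
    (i₀ : Fin L) (a b : Fin L → ℝ)
    (ha : ∀ i, 0 ≤ a i) (ha1 : ∑ i, a i = 1)
    (hb : ∀ i, 0 ≤ b i) (hb1 : ∑ i, b i = 1) :
    ∀ Bab : Fin N → ℝ, (Bab = fun k => ∑ i, T.bvec (ℓ i) k * (a i - b i)) →
      IsGreatest
        {v : ℝ | ∃ s : Fin N → ℝ, (∀ k, s k = -1 ∨ s k = 0 ∨ s k = 1) ∧
          v = ∑ k, s k * (T.w k * Bab k)}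
        (∑ k, |T.w k * Bab k|) ∧
      IsGreatest
        {v : ℝ | ∃ f : Fin L → ℝ, f i₀ = 0 ∧
          (∀ i j, |f i - f j| ≤ T.dist (ℓ i) (ℓ j)) ∧
          v = ∑ i, f i * (a i - b i)}
        (∑ k, |T.w k * Bab k|) :=
  stmt13_general T ℓ i₀ a b ha1 hb1
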